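/- Under the stated context, there exist nonzero ideals 𝔞 and 𝔶 of O_K such that 𝔞² = C₁·O_K and (C₁x + d√−c)·O_K = 𝔞·𝔶ᵖ. -/

import Mathlib

/-!
Write `z = C₁x + d√-c` and `z' = C₁x - d√-c`. Since `C₁` is squarefree and coprime to `C₂`, it
divides `c`, so `z z' = C₁ yᵖ` and `C₁ ∣ z², z z', z'²`. The condition `C₁C₂ ≢ 7 (mod 8)` makes
`y` odd, so `4C₁x²` and `yᵖ` are coprime; as `(z + z')² = C₁ · 4C₁x²`, the ideal `𝔞 = (z, z')`
satisfies `𝔞² = (C₁)`. Dividing `(z)` and `(z')` by `𝔞` leaves two coprime ideals whose product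
is `(y)ᵖ`, so each is a `p`-th power by unique factorisation of ideals.
-/

open Polynomial IntermediateField

noncomputable def sqrtneg (c : ℕ) : ℂ := Complex.I * Real.sqrt c

/-- The field `K = ℚ(√-c)`, realised as the subfield of `ℂ` generated by `i·√c`. -/
noncomputable def Kf (c : ℕ) : IntermediateField ℚ ℂ := ℚ⟮sqrtneg c⟯

theorem Nat.coprime_add_of_gcd_gcd_add_eq_one {a b : ℕ} (h : gcd (gcd a b) (a + b) = 1) :
    Coprime a (a + b) := by
  rw [Nat.gcd_eq_left (Nat.dvd_add (Nat.gcd_dvd_left a b) (Nat.gcd_dvd_right a b))] at h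
  rw [add_comm]
  exact coprime_add_self_right.mpr h

theorem Nat.sq_mod_eight_of_odd {n : ℕ} (hn : Odd n) : n ^ 2 % 8 = 1 := by
  have h2 : n % 2 = 1 := Nat.odd_iff.mp hn
  have h8 : n % 8 < 8 := Nat.mod_lt n (by norm_num)
  rw [Nat.pow_mod]
  interval_cases h : n % 8 <;> omega

/-- Otherwise `8 ∣ a * y ^ p = (a * x) ^ 2 + a * b` with `a * x` odd, forcing `a * b ≡ -1 (mod 8)`. -/
theorem Nat.odd_of_mul_sq_add_eq_pow {a b x y p : ℕ} (hp : 3 ≤ p) (heq : a * x ^ 2 + b = y ^ p)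
    (hcop : Coprime (a * x ^ 2) (y ^ p)) (hmod : a * b % 8 ≠ 7) : Odd y := by
  by_contra hy
  obtain ⟨k, rfl⟩ : 2 ∣ y := even_iff_two_dvd.mp (Nat.not_odd_iff_even.mp hy)
  have h8 : 8 ∣ (2 * k) ^ p :=
    calc 8 = 2 ^ 3 := rfl
      _ ∣ 2 ^ p := pow_dvd_pow 2 hp
      _ ∣ (2 * k) ^ p := pow_dvd_pow_of_dvd (dvd_mul_right 2 k) p
  have hodd : Odd (a * x ^ 2) := Nat.coprime_two_right.mp
    (hcop.coprime_dvd_right (dvd_trans (dvd_mul_right 2 4) h8))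
  obtain ⟨ha, hx⟩ := Nat.odd_mul.mp hodd
  have hax : (a * x) ^ 2 % 8 = 1 :=
    Nat.sq_mod_eight_of_odd (Nat.odd_mul.mpr ⟨ha, (Nat.odd_pow_iff two_ne_zero).mp hx⟩)
  have hsum : a * (2 * k) ^ p = (a * x) ^ 2 + a * b := by rw [← heq]; ring
  have := dvd_mul_of_dvd_right h8 a
  omega

theorem Squarefree.dvd_of_coprime_of_mul_eq {a b c d : ℕ} (ha : Squarefree a)
    (hab : Nat.Coprime a b) (h : a * b = c * d ^ 2) : a ∣ c := by
  have had : Nat.Coprime a d := Nat.coprime_of_dvd fun q hq hqa hqd => by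
    have hqb : Nat.Coprime (q * q) b := Nat.Coprime.mul_left
      (hab.coprime_dvd_left hqa) (hab.coprime_dvd_left hqa)
    have hqq : q * q ∣ a * b := h ▸ dvd_mul_of_dvd_right (sq q ▸ pow_dvd_pow_of_dvd hqd 2) c
    exact hq.one_lt.ne' (Nat.isUnit_iff.mp (ha q (hqb.dvd_of_dvd_mul_right hqq)))
  exact (had.pow_right 2).dvd_of_dvd_mul_right (h ▸ dvd_mul_right a b)

section Ring

variable {R : Type*} [CommRing R]

/-- With `z, z'` the two generators, a Bézout relation `u * 4 a x ^ 2 + v * (a x ^ 2 + e d ^ 2) = 1`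
gives `a = u (z + z') ^ 2 + v z z'`. -/
theorem Ideal.span_pair_sq_eq_span_singleton {a e x d w : R} (hw : w ^ 2 = -(a * e))
    (hcop : IsCoprime (4 * a * x ^ 2) (a * x ^ 2 + e * d ^ 2)) :
    span {a * x + d * w, a * x - d * w} ^ 2 = span {a} := by
  set z := a * x + d * w
  set z' := a * x - d * w
  apply le_antisymm
  · rw [sq, span_pair_mul_span_pair, span_le]
    simp only [Set.insert_subset_iff, Set.singleton_subset_iff, SetLike.mem_coe,
      mem_span_singleton']
    refine ⟨⟨a * x ^ 2 - e * d ^ 2 + 2 * x * d * w, ?_⟩, ⟨a * x ^ 2 + e * d ^ 2, ?_⟩,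
      ⟨a * x ^ 2 + e * d ^ 2, ?_⟩, ⟨a * x ^ 2 - e * d ^ 2 - 2 * x * d * w, ?_⟩⟩
    · linear_combination (-d ^ 2) * hw
    · linear_combination d ^ 2 * hw
    · linear_combination d ^ 2 * hw
    · linear_combination (-d ^ 2) * hw
  · obtain ⟨u, v, huv⟩ := hcop
    have hmem : ∀ r ∈ span {z, z'}, ∀ s ∈ span {z, z'}, r * s ∈ span {z, z'} ^ 2 :=
      fun r hr s hs => sq (span {z, z'}) ▸ mul_mem_mul hr hs
    have hz : z ∈ span {z, z'} := subset_span (Set.mem_insert z _)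
    have hz' : z' ∈ span {z, z'} := subset_span (Set.mem_insert_of_mem z rfl)
    rw [span_singleton_le_iff_mem]
    convert add_mem (mul_mem_left _ u (hmem _ (add_mem hz hz') _ (add_mem hz hz')))
      (mul_mem_left _ v (hmem _ hz _ hz')) using 1
    linear_combination (-a) * huv + (d ^ 2 * v) * hw

variable [IsDedekindDomain R]

theorem Ideal.exists_span_singleton_eq_mul_pow {z z' a y : R} {p : ℕ} (hp : p ≠ 0)
    (hsq : span {z, z'} ^ 2 = span {a}) (hprod : z * z' = a * y ^ p) (hne : z * z' ≠ 0) :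
    ∃ Y : Ideal R, Y ≠ ⊥ ∧ span {z} = span {z, z'} * Y ^ p := by
  set 𝔞 := span {z, z'}
  have h𝔞 : 𝔞 ≠ 0 := fun h => by
    rw [h, zero_pow two_ne_zero, zero_eq_bot, eq_comm, span_singleton_eq_bot] at hsq
    exact hne (by rw [hprod, hsq, zero_mul])
  obtain ⟨Y₁, hY₁⟩ : 𝔞 ∣ span {z} := dvd_iff_le.mpr (span_mono (Set.singleton_subset_iff.mpr
    (Set.mem_insert z _)))
  obtain ⟨Y₂, hY₂⟩ : 𝔞 ∣ span {z'} := dvd_iff_le.mpr (span_mono (Set.singleton_subset_iff.mpr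
    (Set.mem_insert_of_mem z rfl)))
  have hcop : IsUnit (gcd Y₁ Y₂) := by
    rw [gcd_eq_sup, isUnit_iff]
    refine mul_left_cancel₀ h𝔞 ?_
    rw [mul_sup, ← hY₁, ← hY₂, mul_top]
    exact (span_insert z {z'}).symm
  have hY : Y₁ * Y₂ = span {y} ^ p := by
    refine mul_left_cancel₀ (pow_ne_zero 2 h𝔞) ?_
    calc 𝔞 ^ 2 * (Y₁ * Y₂) = span {z} * span {z'} := by rw [hY₁, hY₂]; ring
      _ = 𝔞 ^ 2 * span {y} ^ p := by
        rw [span_singleton_mul_span_singleton, hprod, ← span_singleton_mul_span_singleton, hsq,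
          span_singleton_pow]
  obtain ⟨Y, hY⟩ := exists_eq_pow_of_mul_eq_pow hcop hY
  refine ⟨Y, fun hbot => ?_, by rw [hY₁, hY]⟩
  have : span {z} = ⊥ := by rw [hY₁, hY, hbot, ← zero_eq_bot, zero_pow hp, mul_zero]
  exact hne (by rw [span_singleton_eq_bot.mp this, zero_mul])

theorem Ideal.exists_sq_eq_span_and_span_eq_mul_pow [CharZero R] {C₁ e d x y p : ℕ} (w : R)
    (hC₁ : C₁ ≠ 0) (hp : p ≠ 0) (hw : w ^ 2 = -((C₁ : R) * e))
    (heq : C₁ * x ^ 2 + e * d ^ 2 = y ^ p) (hcop : Nat.Coprime (4 * C₁ * x ^ 2) (y ^ p)) :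
    ∃ 𝔞 Y : Ideal R, 𝔞 ≠ ⊥ ∧ Y ≠ ⊥ ∧ 𝔞 ^ 2 = span {(C₁ : R)} ∧
      span {(C₁ : R) * x + d * w} = 𝔞 * Y ^ p := by
  have hy : y ^ p ≠ 0 := fun h => by
    rw [h, Nat.coprime_zero_right, mul_assoc] at hcop
    omega
  have hcopR : IsCoprime (4 * (C₁ : R) * x ^ 2) ((C₁ : R) * x ^ 2 + e * d ^ 2) := by
    rw [← heq] at hcop
    simpa using (Nat.isCoprime_iff_coprime.mpr hcop).map (Int.castRingHom R)
  have hsq := span_pair_sq_eq_span_singleton hw hcopR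
  have hprod : ((C₁ : R) * x + d * w) * ((C₁ : R) * x - d * w) = C₁ * (y : R) ^ p := by
    rw [← Nat.cast_pow, ← heq]
    push_cast
    linear_combination (-(d : R) ^ 2) * hw
  have hne : ((C₁ : R) * x + d * w) * ((C₁ : R) * x - d * w) ≠ 0 := by
    rw [hprod]; exact_mod_cast Nat.mul_ne_zero hC₁ hy
  obtain ⟨Y, hY, hspan⟩ := exists_span_singleton_eq_mul_pow hp hsq hprod hne
  refine ⟨_, Y, fun h => ?_, hY, hsq, hspan⟩
  rw [h, sq, mul_bot, eq_comm, span_singleton_eq_bot] at hsq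
  exact hC₁ (by exact_mod_cast hsq)

end Ring

section QuadraticField

open NumberField

theorem sqrtneg_sq (c : ℕ) : sqrtneg c ^ 2 = -c := by
  rw [sqrtneg, mul_pow, Complex.I_sq, ← Complex.ofReal_pow, Real.sq_sqrt (Nat.cast_nonneg c)]
  push_cast
  ring

theorem isIntegral_sqrtneg (c : ℕ) : IsIntegral ℤ (sqrtneg c) :=
  ⟨X ^ 2 + C (c : ℤ), monic_X_pow_add_C _ two_ne_zero, by simp [sqrtneg_sq]⟩

instance (c : ℕ) : NumberField (Kf c) where
  to_finiteDimensional := adjoin.finiteDimensional (isIntegral_sqrtneg c).tower_top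

noncomputable def sqrtnegInt (c : ℕ) : 𝓞 (Kf c) :=
  ⟨⟨sqrtneg c, mem_adjoin_simple_self ℚ _⟩,
    (isIntegral_algebraMap_iff (algebraMap (Kf c) ℂ).injective).mp (isIntegral_sqrtneg c)⟩

theorem coe_sqrtnegInt (c : ℕ) :
    ((algebraMap (𝓞 (Kf c)) (Kf c) (sqrtnegInt c) : Kf c) : ℂ) = sqrtneg c :=
  rfl

theorem sqrtnegInt_sq (c : ℕ) : sqrtnegInt c ^ 2 = -(c : 𝓞 (Kf c)) := by
  apply RingOfIntegers.ext
  apply Subtype.ext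
  simp [coe_sqrtnegInt, sqrtneg_sq]

end QuadraticField

theorem stmt3_general (C₁ C₂ c d : ℕ) (hC₁sqf : Squarefree C₁)
    (hcop : Nat.gcd C₁ C₂ = 1) (hmod8 : C₁ * C₂ % 8 ≠ 7)
    (hfact : C₁ * C₂ = c * d ^ 2)
    (p : ℕ) (hp : p.Prime) (hpodd : Odd p)
    (x y : ℕ)
    (heq : C₁ * x ^ 2 + C₂ = y ^ p)
    (hgcd : Nat.gcd (Nat.gcd (C₁ * x ^ 2) C₂) (y ^ p) = 1) :
    ∃ a Y : Ideal (NumberField.RingOfIntegers (Kf c)),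
      a ≠ ⊥ ∧ Y ≠ ⊥ ∧
      a ^ 2 = Ideal.span {(C₁ : NumberField.RingOfIntegers (Kf c))} ∧
      ∃ z : NumberField.RingOfIntegers (Kf c),
        ((algebraMap (NumberField.RingOfIntegers (Kf c)) (Kf c) z : Kf c) : ℂ)
          = (C₁ : ℂ) * (x : ℂ) + (d : ℂ) * sqrtneg c ∧
        Ideal.span {z} = a * Y ^ p := by
  obtain ⟨e, rfl⟩ := hC₁sqf.dvd_of_coprime_of_mul_eq hcop hfact
  have hC₂ : C₂ = e * d ^ 2 :=
    Nat.eq_of_mul_eq_mul_left (Nat.pos_of_ne_zero hC₁sqf.ne_zero) (by rw [hfact]; ring)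
  have hcopy : Nat.Coprime (C₁ * x ^ 2) (y ^ p) :=
    heq ▸ Nat.coprime_add_of_gcd_gcd_add_eq_one (heq ▸ hgcd)
  have hp3 : 3 ≤ p := by
    obtain ⟨k, rfl⟩ := hpodd
    have := hp.two_le
    omega
  have hy : Odd y := Nat.odd_of_mul_sq_add_eq_pow hp3 heq hcopy hmod8
  have hcop4 : Nat.Coprime (4 * C₁ * x ^ 2) (y ^ p) := by
    rw [mul_assoc]
    exact Nat.Coprime.mul_left (Nat.Coprime.pow 2 p (Nat.coprime_two_left.mpr hy)) hcopy
  obtain ⟨𝔞, Y, h𝔞, hY, hsq, hspan⟩ := Ideal.exists_sq_eq_span_and_span_eq_mul_pow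
    (sqrtnegInt (C₁ * e)) hC₁sqf.ne_zero hp.ne_zero (by rw [sqrtnegInt_sq]; push_cast; ring)
    (hC₂ ▸ heq) hcop4
  exact ⟨𝔞, Y, h𝔞, hY, hsq, _, by simp [coe_sqrtnegInt], hspan⟩

theorem stmt3 (C₁ C₂ c d : ℕ) (hC₁pos : 0 < C₁) (hC₁sqf : Squarefree C₁)
    (hC₂pos : 0 < C₂) (hcop : Nat.gcd C₁ C₂ = 1) (hmod8 : C₁ * C₂ % 8 ≠ 7)
    (hcpos : 0 < c) (hdpos : 0 < d) (hcsqf : Squarefree c)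
    (hfact : C₁ * C₂ = c * d ^ 2)
    (p : ℕ) (hp : p.Prime) (hpodd : Odd p)
    (x y : ℕ) (hxpos : 0 < x) (hypos : 0 < y)
    (heq : C₁ * x ^ 2 + C₂ = y ^ p)
    (hgcd : Nat.gcd (Nat.gcd (C₁ * x ^ 2) C₂) (y ^ p) = 1) :
    ∃ a Y : Ideal (NumberField.RingOfIntegers (Kf c)),
      a ≠ ⊥ ∧ Y ≠ ⊥ ∧
      a ^ 2 = Ideal.span {(C₁ : NumberField.RingOfIntegers (Kf c))} ∧
      ∃ z : NumberField.RingOfIntegers (Kf c),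
        ((algebraMap (NumberField.RingOfIntegers (Kf c)) (Kf c) z : Kf c) : ℂ)
          = (C₁ : ℂ) * (x : ℂ) + (d : ℂ) * sqrtneg c ∧
        Ideal.span {z} = a * Y ^ p :=
  stmt3_general C₁ C₂ c d hC₁sqf hcop hmod8 hfact p hp hpodd x y heq hgcd
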